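/- Let u, v be rational numbers with (2u + 3)·v² + 1 ≠ 0, and set a = (u² + v²)/((2u + 3)·v² + 1), p = v·(a·v² + 1), q = a·v² − u, r = v·(a·v² − u), s = v² + 1. Then (p + q)⁴ + a·(r − s)⁴ = (p − q)⁴ + a·(r + s)⁴. -/

import Mathlib

/-!
Since `(x + y)⁴ - (x - y)⁴ = 8xy(x² + y²)`, the quartic equation is equivalent to
`pq(p² + q²) = a·rs(r² + s²)`. For the parametrization of `p, q, r, s` by `a, u, v`, the
difference of the two sides factors as `vq·(a((2u + 3)v² + 1) - (u² + v²))·(av⁴ - 1)`,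
and the given value of `a` kills the middle factor.
-/

theorem add_pow_four_sub_sub_pow_four {R : Type*} [CommRing R] (x y : R) :
    (x + y) ^ 4 - (x - y) ^ 4 = 8 * (x * y * (x ^ 2 + y ^ 2)) := by
  ring

theorem quartic_eq_iff {K : Type*} [Field K] [CharZero K] (a p q r s : K) :
    (p + q) ^ 4 + a * (r - s) ^ 4 = (p - q) ^ 4 + a * (r + s) ^ 4 ↔
      p * q * (p ^ 2 + q ^ 2) = a * (r * s * (r ^ 2 + s ^ 2)) := by
  have hpq := add_pow_four_sub_sub_pow_four p q
  have hrs := add_pow_four_sub_sub_pow_four r s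
  constructor
  · intro h
    linear_combination (h - hpq + a * hrs) / 8
  · intro h
    linear_combination 8 * h + hpq - a * hrs

theorem nest_defect_factor {R : Type*} [CommRing R] (a u v p q r s : R)
    (hp : p = v * (a * v ^ 2 + 1)) (hq : q = a * v ^ 2 - u)
    (hr : r = v * (a * v ^ 2 - u)) (hs : s = v ^ 2 + 1) :
    p * q * (p ^ 2 + q ^ 2) - a * (r * s * (r ^ 2 + s ^ 2)) =
      v * q * (a * ((2 * u + 3) * v ^ 2 + 1) - (u ^ 2 + v ^ 2)) * (a * v ^ 4 - 1) := by
  subst hp hq hr hs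
  ring

theorem stmt_9 (u v : ℚ) (h : (2 * u + 3) * v ^ 2 + 1 ≠ 0)
    (a p q r s : ℚ)
    (ha : a = (u ^ 2 + v ^ 2) / ((2 * u + 3) * v ^ 2 + 1))
    (hp : p = v * (a * v ^ 2 + 1)) (hq : q = a * v ^ 2 - u)
    (hr : r = v * (a * v ^ 2 - u)) (hs : s = v ^ 2 + 1) :
    (p + q) ^ 4 + a * (r - s) ^ 4 = (p - q) ^ 4 + a * (r + s) ^ 4 := by
  have haD : a * ((2 * u + 3) * v ^ 2 + 1) = u ^ 2 + v ^ 2 := by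
    rw [ha, div_mul_cancel₀ _ h]
  rw [quartic_eq_iff, ← sub_eq_zero, nest_defect_factor a u v p q r s hp hq hr hs, haD]
  ring
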